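/- arXiv:1203.2832 — 2 statements merged into one kernel-verified Lean document; each statement's English description precedes it below -/
import Mathlib

section
/- Let 0 < δ < 1 and let (a_t)_{t≥1} be a sequence of real numbers bounded in absolute value by M ≥ 1. For h ≥ 1 define a_*^h = (1-δ) ∑_{t≥h} δ^{t-h} a_t. Suppose a ≥ 0 is an accumulation point of the sequence (a_*^h)_h. Then for every γ > 0, if δ is sufficiently close to 1 (specifically (1-δ)M < γ/2), there exists a time h such that a_h > a - γ and a_*^{h+1} < a + γ. -/
/-!
Write `ε = (1 - δ) γ / 2`. The tail values satisfy `A h = (1 - δ) a h + δ A (h + 1)`. If the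
conclusion failed, then `A h ≥ a₀ - ε` would force `A (h + 1) ≥ a₀ + ε`: either `a h > a₀ - γ`,
and then `A (h + 1) ≥ a₀ + γ` directly, or `a h ≤ a₀ - γ`, and then the recursion pushes
`A (h + 1)` above `a₀ + ε`. Starting from a time where `A` is within `ε` of `a₀`, the tail values
would stay above `a₀ + ε` forever, so `a₀` could not be an accumulation point.
-/

open Filter

section Discounted

variable {δ : ℝ}

theorem summable_pow_mul_of_abs_le (hδ0 : 0 ≤ δ) (hδ1 : δ < 1) {b : ℕ → ℝ} {M : ℝ}
    (hb : ∀ t, |b t| ≤ M) : Summable fun t => δ ^ t * b t := by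
  refine Summable.of_norm_bounded ((summable_geometric_of_lt_one hδ0 hδ1).mul_right M) fun t => ?_
  rw [Real.norm_eq_abs, abs_mul, abs_of_nonneg (pow_nonneg hδ0 t)]
  exact mul_le_mul_of_nonneg_left (hb t) (pow_nonneg hδ0 t)

theorem tsum_pow_mul_eq_add {b : ℕ → ℝ} (hs : Summable fun t => δ ^ t * b t) :
    ∑' t, δ ^ t * b t = b 0 + δ * ∑' t, δ ^ t * b (t + 1) := by
  rw [hs.tsum_eq_zero_add, ← tsum_mul_left]
  simp only [pow_zero, one_mul, pow_succ]
  congr 1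
  exact tsum_congr fun t => by ring

theorem discounted_value_eq_add {M : ℝ} {a A : ℕ → ℝ} (hδ0 : 0 ≤ δ) (hδ1 : δ < 1)
    (hbd : ∀ t, 1 ≤ t → |a t| ≤ M)
    (hA : ∀ h, 1 ≤ h → A h = (1 - δ) * ∑' t : ℕ, δ ^ t * a (h + t))
    {h : ℕ} (hh : 1 ≤ h) : A h = (1 - δ) * a h + δ * A (h + 1) := by
  have hs : Summable fun t => δ ^ t * a (h + t) :=
    summable_pow_mul_of_abs_le hδ0 hδ1 fun t => hbd _ (hh.trans (Nat.le_add_right h t))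
  rw [hA h hh, hA (h + 1) (by omega), tsum_pow_mul_eq_add hs]
  simp only [Nat.add_zero, ← add_assoc, Nat.add_right_comm h _ 1]
  ring

end Discounted

theorem add_le_of_sub_le_convex_comb {δ γ a₀ x y v : ℝ} (hδ0 : 0 < δ) (hδ1 : δ < 1)
    (hγ : 0 < γ) (hv : v = (1 - δ) * x + δ * y) (hx : a₀ - γ < x → a₀ + γ ≤ y)
    (hav : a₀ - (1 - δ) * γ / 2 ≤ v) : a₀ + (1 - δ) * γ / 2 ≤ y := by
  rcases lt_or_ge (a₀ - γ) x with hhigh | hlow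
  · nlinarith [hx hhigh]
  · have hδy : δ * (y - a₀ - (1 - δ) * γ / 2) ≥ (1 - δ) ^ 2 * γ / 2 := by
      nlinarith [mul_le_mul_of_nonneg_left hlow (sub_nonneg.2 hδ1.le)]
    by_contra! hy
    nlinarith [mul_pos hδ0 (sub_pos.2 hy)]

theorem not_mapClusterPt_of_eventually_add_le {a₀ ε : ℝ} {A : ℕ → ℝ} (hε : 0 < ε)
    (hA : ∀ᶠ n in atTop, a₀ + ε ≤ A n) : ¬ MapClusterPt a₀ atTop A := by
  rw [mapClusterPt_iff_frequently]
  intro hfreq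
  obtain ⟨n, hn, hle⟩ :=
    ((hfreq _ (Metric.ball_mem_nhds a₀ hε)).and_eventually hA).exists
  rw [Metric.mem_ball, Real.dist_eq, abs_sub_lt_iff] at hn
  linarith [hn.1]

theorem stable_core_accumulation_lemma_general
    (δ M a₀ γ : ℝ) (a : ℕ → ℝ) (A : ℕ → ℝ)
    (hδ0 : 0 < δ) (hδ1 : δ < 1)
    (hbd : ∀ t, 1 ≤ t → |a t| ≤ M)
    (hA : ∀ h, 1 ≤ h → A h = (1 - δ) * ∑' t : ℕ, δ ^ t * a (h + t))
    (hacc : MapClusterPt a₀ Filter.atTop A)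
    (hγ : 0 < γ) :
    ∃ h, 1 ≤ h ∧ a h > a₀ - γ ∧ A (h + 1) < a₀ + γ := by
  by_contra! hcon
  set ε := (1 - δ) * γ / 2
  have hε : 0 < ε := by have := sub_pos.2 hδ1; positivity
  have hstep : ∀ h, 1 ≤ h → a₀ - ε ≤ A h → a₀ + ε ≤ A (h + 1) := fun h hh =>
    add_le_of_sub_le_convex_comb hδ0 hδ1 hγ (discounted_value_eq_add hδ0.le hδ1 hbd hA hh)
      (hcon h hh)
  obtain ⟨h₀, hA₀, hh₀⟩ :=
    ((mapClusterPt_iff_frequently.1 hacc _ (Metric.ball_mem_nhds a₀ hε)).and_eventually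
      (eventually_ge_atTop 1)).exists
  have htrap : ∀ n, h₀ ≤ n → a₀ - ε ≤ A n := by
    refine Nat.le_induction ?_ fun n hn ih => (hstep n (hh₀.trans hn) ih).trans' (by linarith)
    rw [Metric.mem_ball, Real.dist_eq, abs_sub_lt_iff] at hA₀
    linarith [hA₀.2]
  refine not_mapClusterPt_of_eventually_add_le hε ?_ hacc
  filter_upwards [eventually_ge_atTop (h₀ + 1)] with n hn
  obtain ⟨m, rfl⟩ := Nat.exists_eq_add_of_le' (Nat.one_le_of_lt hn)
  exact hstep m (by omega) (htrap m (by omega))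

/-- Accumulation-point lemma for the stable core: along a bounded payoff
stream whose tail-discounted values accumulate at `a₀ ≥ 0`, if `(1-δ)M < γ/2`
there is a time `h` where the instantaneous payoff exceeds `a₀ - γ` while the
continuation value at `h+1` is below `a₀ + γ`. -/
theorem stable_core_accumulation_lemma
    (δ M a₀ γ : ℝ) (a : ℕ → ℝ) (A : ℕ → ℝ)
    (hδ0 : 0 < δ) (hδ1 : δ < 1) (hM : 1 ≤ M)
    (hbd : ∀ t, 1 ≤ t → |a t| ≤ M)
    (hA : ∀ h, 1 ≤ h → A h = (1 - δ) * ∑' t : ℕ, δ ^ t * a (h + t))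
    (ha0 : 0 ≤ a₀)
    (hacc : MapClusterPt a₀ Filter.atTop A)
    (hγ : 0 < γ)
    (hclose : (1 - δ) * M < γ / 2) :
    ∃ h, 1 ≤ h ∧ a h > a₀ - γ ∧ A (h + 1) < a₀ + γ :=
  stable_core_accumulation_lemma_general δ M a₀ γ a A hδ0 hδ1 hbd hA hacc hγ
end

section
/- For every α₁, …, α_k ≥ 0 with ∑_j α_j = 1 and every ε > 0, there exists δ₀ < 1 such that for all δ ∈ (δ₀, 1) there is a partition of the positive integers into disjoint sets T¹, …, T^k with |α_j - (1-δ) ∑_{t ∈ T^j} δ^{t-1}| < ε for every j. -/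
/-!
For `0 < δ < 1` the weights `(1 - δ) δ ^ e` of the exponents `e = 0, 1, …` sum to `1`, and the
sublevel set `{e | δ ^ e ≤ x}` is a tail `{e | a ≤ e}` of weight `δ ^ a ∈ [δ x, x]`. Cut `(0, 1]` at
the partial sums `s_j = α_0 + ⋯ + α_(j-1)` and give block `j` the exponents with
`δ ^ e ∈ (s_j, s_(j+1)]`: its weight is `α_j` up to the difference of two errors in `[0, 1 - δ]`,
hence within `1 - δ < ε` once `δ > 1 - ε`.
-/

open Set Function

noncomputable def discountedWeight (δ : ℝ) (S : Set ℕ) : ℝ :=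
  (1 - δ) * ∑' e : S, δ ^ (e : ℕ)

section

variable {δ : ℝ}

theorem discountedWeight_Ici (h0 : 0 ≤ δ) (h1 : δ < 1) (a : ℕ) :
    discountedWeight δ (Ici a) = δ ^ a := by
  have hrange : range (· + a) = Ici a := by
    ext e
    exact ⟨by rintro ⟨n, rfl⟩; exact Nat.le_add_left a n, fun he => ⟨e - a, Nat.sub_add_cancel he⟩⟩
  rw [discountedWeight, ← hrange, tsum_range (δ ^ ·) (add_left_injective a)]
  simp only [pow_add, tsum_mul_right, tsum_geometric_of_lt_one h0 h1]
  field_simp [sub_ne_zero.mpr h1.ne']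

theorem discountedWeight_union (h0 : 0 ≤ δ) (h1 : δ < 1) {S S' : Set ℕ} (h : Disjoint S S') :
    discountedWeight δ (S ∪ S') = discountedWeight δ S + discountedWeight δ S' := by
  have hsum := summable_geometric_of_lt_one h0 h1
  rw [discountedWeight, (hsum.subtype S).tsum_union_disjoint h (hsum.subtype S'), mul_add]
  rfl

theorem discountedWeight_preimage_Iic_mem_Icc (h0 : 0 < δ) (h1 : δ < 1) {x : ℝ}
    (hx0 : 0 ≤ x) (hx1 : x ≤ 1) :
    discountedWeight δ ((δ ^ ·) ⁻¹' Iic x) ∈ Icc (δ * x) x := by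
  rcases hx0.eq_or_lt with rfl | hx
  · have hempty : (δ ^ ·) ⁻¹' Iic (0 : ℝ) = ∅ :=
      eq_empty_of_forall_notMem fun e he => (pow_pos h0 e).not_ge he
    simp [hempty, discountedWeight]
  classical
  have hex : ∃ n, δ ^ n ≤ x := (exists_pow_lt_of_lt_one hx h1).imp fun _ => le_of_lt
  have hIci : (δ ^ ·) ⁻¹' Iic x = Ici (Nat.find hex) := by
    ext e
    exact ⟨Nat.find_min' hex,
      fun he => (pow_le_pow_of_le_one h0.le h1.le he).trans (Nat.find_spec hex)⟩
  -- minimality of `a = Nat.find hex` gives `x < δ ^ (a - 1)`, i.e. `δ * x ≤ δ ^ a`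
  rw [hIci, discountedWeight_Ici h0.le h1]
  refine ⟨?_, Nat.find_spec hex⟩
  rcases Nat.eq_zero_or_eq_succ_pred (Nat.find hex) with ha | ha
  · rw [ha, pow_zero]
    nlinarith
  · have hlt : x < δ ^ (Nat.find hex - 1) := not_le.mp (Nat.find_min hex (by omega))
    rw [ha, pow_succ']
    exact mul_le_mul_of_nonneg_left hlt.le h0.le

theorem abs_sub_discountedWeight_preimage_Ioc_le (h0 : 0 < δ) (h1 : δ < 1) {a b : ℝ}
    (ha : 0 ≤ a) (hab : a ≤ b) (hb : b ≤ 1) :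
    |(b - a) - discountedWeight δ ((δ ^ ·) ⁻¹' Ioc a b)| ≤ 1 - δ := by
  have hunion : (δ ^ ·) ⁻¹' Iic a ∪ (δ ^ ·) ⁻¹' Ioc a b = (δ ^ ·) ⁻¹' Iic b := by
    rw [← preimage_union, Iic_union_Ioc_eq_Iic hab]
  have hdisj : Disjoint ((δ ^ ·) ⁻¹' Iic a) ((δ ^ ·) ⁻¹' Ioc a b) :=
    ((Iic_disjoint_Ioi le_rfl).mono_right Ioc_subset_Ioi_self).preimage _
  have hsplit := discountedWeight_union h0.le h1 hdisj
  rw [hunion] at hsplit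
  obtain ⟨hal, hau⟩ := discountedWeight_preimage_Iic_mem_Icc h0 h1 ha (hab.trans hb)
  obtain ⟨hbl, hbu⟩ := discountedWeight_preimage_Iic_mem_Icc h0 h1 (ha.trans hab) hb
  rw [abs_le]
  constructor <;> nlinarith

theorem Monotone.exists_fin_mem_Ioc {β : Type*} [LinearOrder β] {s : ℕ → β} (hs : Monotone s)
    {k : ℕ} {v : β} (hv : v ∈ Ioc (s 0) (s k)) : ∃ j : Fin k, v ∈ Ioc (s j) (s (j + 1)) := by
  rw [← hs.biUnion_Ico_Ioc_map_succ] at hv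
  simp only [mem_iUnion, mem_Ico] at hv
  obtain ⟨i, ⟨-, hik⟩, hvi⟩ := hv
  exact ⟨⟨i, hik⟩, hvi⟩

theorem exists_partition_abs_sub_discountedWeight_le (h0 : 0 < δ) (h1 : δ < 1) {k : ℕ}
    {s : ℕ → ℝ} (hs : Monotone s) (hs0 : s 0 = 0) (hsk : s k = 1) :
    ∃ B : Fin k → Set ℕ, Pairwise (Disjoint on B) ∧ ⋃ j, B j = univ ∧
      ∀ j : Fin k, |(s (j + 1) - s j) - discountedWeight δ (B j)| ≤ 1 - δ := by
  refine ⟨fun j => (δ ^ ·) ⁻¹' Ioc (s j) (s (j + 1)), fun j j' hjj' => ?_, ?_, fun j => ?_⟩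
  · exact (hs.pairwise_disjoint_on_Ioc_succ (Fin.val_injective.ne hjj')).preimage _
  · refine eq_univ_of_forall fun e => mem_iUnion.mpr (hs.exists_fin_mem_Ioc ?_)
    rw [hs0, hsk]
    exact ⟨pow_pos h0 e, pow_le_one₀ h0.le h1.le⟩
  · exact abs_sub_discountedWeight_preimage_Ioc_le h0 h1 (hs0 ▸ hs (Nat.zero_le _))
      (hs (Nat.le_succ _)) (hsk ▸ hs j.isLt)

end

theorem exists_monotone_partial_sums {k : ℕ} (α : Fin k → ℝ) (hα0 : ∀ j, 0 ≤ α j) :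
    ∃ s : ℕ → ℝ, Monotone s ∧ s 0 = 0 ∧ s k = ∑ j, α j ∧ ∀ j : Fin k, s (j + 1) - s j = α j := by
  set α' : ℕ → ℝ := fun i => if h : i < k then α ⟨i, h⟩ else 0
  have hα'0 : ∀ i, 0 ≤ α' i := fun i => by
    by_cases h : i < k <;> simp [α', h, hα0]
  refine ⟨fun m => ∑ i ∈ Finset.range m, α' i, ?_, Finset.sum_range_zero _, ?_, fun j => ?_⟩
  · exact fun m n hmn => Finset.sum_le_sum_of_subset_of_nonneg
      (Finset.range_subset_range.mpr hmn) fun i _ _ => hα'0 i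
  · simp only [← Fin.sum_univ_eq_sum_range, α', Fin.is_lt, dite_true]
  · simp [Finset.sum_range_succ, α']

/-- Fudenberg–Maskin time-partition device: for high discount factors the
positive integers can be partitioned into sets `T¹,…,T^k` whose normalized
discounted weights approximate any given convex weights `α` within `ε`. -/
theorem time_partition_of_convex_weights
    (k : ℕ) (α : Fin k → ℝ) (hα0 : ∀ j, 0 ≤ α j) (hα1 : ∑ j, α j = 1)
    (ε : ℝ) (hε : 0 < ε) :
    ∃ δ₀ : ℝ, δ₀ < 1 ∧ ∀ δ : ℝ, δ₀ < δ → δ < 1 →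
      ∃ T : Fin k → Set ℕ,
        (Pairwise fun j j' => Disjoint (T j) (T j')) ∧
        (⋃ j, T j) = {t : ℕ | 1 ≤ t} ∧
        ∀ j, |α j - (1 - δ) * ∑' t : T j, δ ^ ((t : ℕ) - 1)| < ε := by
  obtain ⟨s, hs, hs0, hsk, hsα⟩ := exists_monotone_partial_sums α hα0
  refine ⟨max (1 - ε) 0, max_lt (by linarith) one_pos, fun δ hδ hδ1 => ?_⟩
  obtain ⟨hδε, hδ0⟩ := max_lt_iff.mp hδ
  obtain ⟨B, hdisj, hcover, hB⟩ :=
    exists_partition_abs_sub_discountedWeight_le hδ0 hδ1 hs hs0 (hsk.trans hα1)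
  -- the exponent `e` of `δ` is the period `e + 1`
  refine ⟨fun j => (· + 1) '' B j, fun j j' hjj' => ?_, ?_, fun j => ?_⟩
  · exact (disjoint_image_iff (add_left_injective 1)).mpr (hdisj hjj')
  · rw [← image_iUnion, hcover, image_univ]
    ext t
    simp [Nat.one_le_iff_ne_zero, Nat.pos_iff_ne_zero]
  · beta_reduce
    rw [tsum_image (fun t : ℕ => δ ^ (t - 1)) (add_left_injective 1).injOn]
    simp only [Nat.add_sub_cancel, ← hsα j]
    exact (hB j).trans_lt (by linarith)
end
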